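/- Let A be a commutative ring of Krull dimension < n (n ≥ 0), and let a, b₁, …, bₙ ∈ A with 1 ∈ (a, b₁, …, bₙ). Then there exist x₁, …, xₙ ∈ A such that 1 ∈ (b₁ + a·x₁, …, bₙ + a·xₙ). -/

import Mathlib

/-!
Induction on `n`, after Coquand and Lombardi. The Krull boundary ideal `(l) + (√0 : l)` of
`l = bₙ` lies in no minimal prime, so modulo it the dimension drops below `n - 1` while `bₙ`
vanishes. Induction there yields `x₁, …, xₙ₋₁` for which `J = (bᵢ + a xᵢ)ᵢ<ₙ` is comaximal with
the boundary ideal: `1 = j + u l + w` with `j ∈ J` and `w l` nilpotent. Then `xₙ = w` works: a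
prime containing `J` and `l + a w` contains `w` or `l`, hence `l`, and then `w` because `a` is
invertible modulo `J + (l)`; this contradicts `1 = j + u l + w`.
-/

open Ideal Set

section

variable {R : Type*} [CommRing R]

theorem Ideal.exists_notMem_isNilpotent_mul_of_mem_minimalPrimes {p : Ideal R}
    (hp : p ∈ minimalPrimes R) {x : R} (hx : x ∈ p) : ∃ s ∉ p, IsNilpotent (s * x) := by
  have : p.IsPrime := hp.1.1
  obtain ⟨k, hk⟩ : algebraMap R (Localization.AtPrime p) x ∈ (⊥ : Ideal _).radical := by
    rw [← Ideal.map_bot (f := algebraMap R (Localization.AtPrime p)),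
      IsLocalization.AtPrime.radical_map_of_mem_minimalPrimes _ p ⊥ hp]
    exact mem_map_of_mem _ hx
  rw [mem_bot, ← map_pow, IsLocalization.map_eq_zero_iff p.primeCompl] at hk
  obtain ⟨s, hs⟩ := hk
  exact ⟨s, s.2, k + 1, by linear_combination ((s : R) ^ k * x) * hs⟩

/-- The zero locus of `krullBoundary l` is the boundary of `V(l)` in `Spec R`, as `V(√0 : l)` is
the closure of `D(l)`. -/
def Ideal.krullBoundary (l : R) : Ideal R :=
  span {l} ⊔ (nilradical R).colon (span {l})

theorem Ideal.krullBoundary_not_le_of_mem_minimalPrimes (l : R) {p : Ideal R}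
    (hp : p ∈ minimalPrimes R) : ¬ krullBoundary l ≤ p := by
  intro hle
  obtain ⟨s, hs, hsl⟩ := exists_notMem_isNilpotent_mul_of_mem_minimalPrimes hp
    (hle (mem_sup_left (mem_span_singleton_self l)))
  exact hs (hle (mem_sup_right
    (Submodule.mem_colon_span_singleton.mpr (mem_nilradical.mpr hsl))))

theorem ringKrullDim_quotient_succ_le_of_forall_not_le {I : Ideal R}
    (hI : ∀ p ∈ minimalPrimes R, ¬ I ≤ p) : ringKrullDim (R ⧸ I) + 1 ≤ ringKrullDim R := by
  by_cases hI' : I = ⊤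
  · rw [hI', ringKrullDim_eq_bot_of_subsingleton]
    simp
  have : Nonempty (PrimeSpectrum.zeroLocus (R := R) I) := by
    rwa [nonempty_coe_sort, nonempty_iff_ne_empty, ne_eq,
      PrimeSpectrum.zeroLocus_empty_iff_eq_top]
  have := Quotient.nontrivial_iff.mpr hI'
  have := (Ideal.Quotient.mk I).domain_nontrivial
  rw [ringKrullDim_quotient, Order.krullDim_eq_iSup_length, ringKrullDim,
    Order.krullDim_eq_iSup_length, ← WithBot.coe_one, ← WithBot.coe_add,
    ENat.iSup_add, WithBot.coe_le_coe, iSup_le_iff]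
  intro c
  let c' := c.map Subtype.val (Subtype.strictMono_coe _)
  obtain ⟨p, hp, hp'⟩ := exists_minimalPrimes_le (J := c'.head.asIdeal) bot_le
  have hIc : I ≤ c'.head.asIdeal := c.head.2
  have hlt : (⟨p, hp.1.1⟩ : PrimeSpectrum R) < c'.head :=
    lt_of_le_of_ne hp' fun h ↦ hI p hp (by rwa [← h] at hIc)
  exact le_iSup_of_le (c'.cons _ hlt) (by simp [c'])

theorem ringKrullDim_quotient_krullBoundary_lt {n : ℕ} (hdim : ringKrullDim R < (n + 1 : ℕ))
    (l : R) : ringKrullDim (R ⧸ krullBoundary l) < n := by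
  have := (ringKrullDim_quotient_succ_le_of_forall_not_le
    fun _ ↦ krullBoundary_not_le_of_mem_minimalPrimes l).trans_lt hdim
  push_cast at this
  exact lt_of_add_lt_add_right this

theorem sup_span_singleton_add_mul_eq_top {J : Ideal R} {a l w : R}
    (ha : J ⊔ span {a, l} = ⊤) (hw : J ⊔ span {l, w} = ⊤) (hnil : IsNilpotent (w * l)) :
    J ⊔ span {l + a * w} = ⊤ := by
  by_contra h
  obtain ⟨p, hp, hle⟩ := exists_le_maximal _ h
  have hJ : J ≤ p := le_sup_left.trans hle
  have hv : l + a * w ∈ p := hle (mem_sup_right (mem_span_singleton_self _))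
  have hnot {x y : R} (hxy : J ⊔ span {x, y} = ⊤) (hx : x ∈ p) : y ∉ p := fun hy ↦
    hp.ne_top (top_le_iff.mp (hxy ▸ sup_le hJ (span_le.mpr (insert_subset hx (by simpa using hy)))))
  have hl : l ∈ p := by
    rcases hp.isPrime.mem_or_mem (nilpotent_iff_mem_prime.mp hnil p hp.isPrime) with hw' | hl
    · simpa using sub_mem hv (mul_mem_left _ a hw')
    · exact hl
  have haw : a * w ∈ p := by simpa using sub_mem hv hl
  exact hnot hw hl ((hp.isPrime.mem_or_mem haw).resolve_left fun ha' ↦ hnot ha ha' hl)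

theorem span_insert_range_map_eq_top_of_snoc {S : Type*} [CommRing S] (f : R →+* S) {n : ℕ}
    {a l : R} {b : Fin n → R}
    (h : span (insert a (range (Fin.snoc b l : Fin (n + 1) → R))) = ⊤) (hl : f l = 0) :
    span (insert (f a) (range (f ∘ b))) = ⊤ := by
  simpa [map_span, image_insert_eq, ← range_comp, Fin.comp_snoc, hl, insert_comm (f a) 0,
    Ideal.map_top] using congrArg (map f) h

theorem exists_span_range_add_mul_sup_eq_top {I : Ideal R} {n : ℕ} (a : R) (b : Fin n → R)
    (x' : Fin n → R ⧸ I)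
    (h : span (range fun i ↦ Ideal.Quotient.mk I (b i) + Ideal.Quotient.mk I a * x' i) = ⊤) :
    ∃ x : Fin n → R, span (range fun i ↦ b i + a * x i) ⊔ I = ⊤ := by
  obtain ⟨x, rfl⟩ := Ideal.Quotient.mk_surjective.comp_left x'
  refine ⟨x, ?_⟩
  rw [← mk_ker (I := I), ← comap_map_of_surjective' _ Ideal.Quotient.mk_surjective, map_span,
    ← range_comp, comap_eq_top_iff]
  simpa [Function.comp_def] using h

theorem exists_span_range_snoc_eq_top {n : ℕ} {a l : R} {b x : Fin n → R}
    (hunim : span (insert a (range (Fin.snoc b l : Fin (n + 1) → R))) = ⊤)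
    (hx : span (range fun i ↦ b i + a * x i) ⊔ krullBoundary l = ⊤) :
    ∃ y : Fin (n + 1) → R,
      span (range fun i ↦ (Fin.snoc b l : Fin (n + 1) → R) i + a * y i) = ⊤ := by
  set J := span (range fun i ↦ b i + a * x i)
  obtain ⟨j, hj, _, hy, hjy⟩ := Submodule.mem_sup.mp ((eq_top_iff_one _).mp hx)
  obtain ⟨_, hz, w, hw, rfl⟩ := Submodule.mem_sup.mp hy
  obtain ⟨u, rfl⟩ := mem_span_singleton'.mp hz
  refine ⟨Fin.snoc x w, ?_⟩
  have hal : J ⊔ span {a, l} = ⊤ := by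
    rw [Fin.range_snoc] at hunim
    refine top_le_iff.mp (hunim ▸ span_le.mpr (insert_subset ?_ (insert_subset ?_ ?_)))
    · exact mem_sup_right (subset_span (mem_insert a _))
    · exact mem_sup_right (subset_span (mem_insert_of_mem a rfl))
    · rintro _ ⟨i, rfl⟩
      simpa using sub_mem (mem_sup_left (subset_span ⟨i, rfl⟩) : b i + a * x i ∈ J ⊔ span {a, l})
        (mem_sup_right (mul_mem_right (x i) _ (subset_span (mem_insert a _))))
  have hlw : J ⊔ span {l, w} = ⊤ := by
    refine (eq_top_iff_one _).mpr (hjy ▸ add_mem (mem_sup_left hj) (mem_sup_right ?_))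
    exact add_mem (mul_mem_left _ u (subset_span (mem_insert l _)))
      (subset_span (mem_insert_of_mem l rfl))
  have hnil : IsNilpotent (w * l) :=
    mem_nilradical.mp (Submodule.mem_colon_span_singleton.mp hw)
  have hsnoc : (fun i ↦ (Fin.snoc b l : Fin (n + 1) → R) i + a * (Fin.snoc x w : Fin (n + 1) → R) i)
      = Fin.snoc (fun i ↦ b i + a * x i) (l + a * w) := by
    ext i
    refine Fin.lastCases ?_ (fun i ↦ ?_) i <;> simp
  rw [hsnoc, Fin.range_snoc, span_insert, sup_comm]
  exact sup_span_singleton_add_mul_eq_top hal hlw hnil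

end

/-- Bass's stable range theorem, non-noetherian version with Krull dimension:
if `Kdim A < n` and `1 ∈ (a, b₁, …, bₙ)` then there exist `x₁, …, xₙ` with
`1 ∈ (b₁ + a·x₁, …, bₙ + a·xₙ)`. -/
theorem bass_stable_range {A : Type*} [CommRing A] (n : ℕ)
    (hdim : ringKrullDim A < n) (a : A) (b : Fin n → A)
    (hunim : (1 : A) ∈ Ideal.span (insert a (Set.range b))) :
    ∃ x : Fin n → A, (1 : A) ∈ Ideal.span (Set.range fun i => b i + a * x i) := by
  simp only [← eq_top_iff_one] at hunim ⊢
  induction n generalizing A with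
  | zero =>
    have : Subsingleton A := not_nontrivial_iff_subsingleton.mp fun _ ↦
      (ringKrullDim_nonneg_of_nontrivial (R := A)).not_gt (by exact_mod_cast hdim)
    exact ⟨0, Subsingleton.elim _ _⟩
  | succ n ih =>
    obtain ⟨b, l, rfl⟩ : ∃ b' l, b = Fin.snoc b' l :=
      ⟨Fin.init b, b (Fin.last n), (Fin.snoc_init_self b).symm⟩
    let π := Ideal.Quotient.mk (krullBoundary l)
    have hπl : π l = 0 := Quotient.eq_zero_iff_mem.mpr (mem_sup_left (mem_span_singleton_self l))
    obtain ⟨x', hx'⟩ := ih (ringKrullDim_quotient_krullBoundary_lt hdim l) (π a) (π ∘ b)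
      (span_insert_range_map_eq_top_of_snoc π hunim hπl)
    obtain ⟨x, hx⟩ := exists_span_range_add_mul_sup_eq_top a b x' hx'
    exact exists_span_range_snoc_eq_top hunim hx
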